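/- For real z with |z| < 27/4, ∑_{n≥1} z^n / (n² · binom(3n, n)) = (2/3) · ∫_0^1 (−log(1 − z x² + z x³)) / (x(1−x)) dx. -/

import Mathlib

/-!
With `t = z x² (1 - x)` we have `|t| ≤ 4|z|/27 < 1` on `[0, 1]`, so
`-log (1 - t) / (x (1 - x)) = ∑ z^(n+1) x^(2n+1) (1 - x)^n / (n + 1)`, dominated by the geometric
series `|z| (4|z|/27)^n`. Integrating termwise, the Beta integral
`∫₀¹ x^(2n+1) (1 - x)^n = (2n+1)! n! / (3n+2)!` equals `3 / (2 (n+1) binom(3n+3, n+1))`.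
-/
open Real MeasureTheory intervalIntegral Set
open scoped Nat

theorem integral_pow_mul_one_sub_pow (a b : ℕ) :
    ∫ x in (0:ℝ)..1, x ^ a * (1 - x) ^ b = (a ! * b ! : ℝ) / (a + b + 1)! := by
  have h := Complex.betaIntegral_eq_Gamma_mul_div (a + 1) (b + 1)
    (by norm_cast; positivity) (by norm_cast; positivity)
  rw [show (a + 1 : ℂ) + (b + 1) = (a + b + 1 : ℕ) + 1 by push_cast; ring] at h
  simp only [Complex.betaIntegral, add_sub_cancel_right, Complex.Gamma_nat_eq_factorial] at h
  norm_cast at h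
  apply Complex.ofReal_injective
  rw [← intervalIntegral.integral_ofReal, h]
  simp

theorem sq_mul_one_sub_le {x : ℝ} (hx0 : 0 ≤ x) : x ^ 2 * (1 - x) ≤ 4 / 27 := by
  nlinarith [sq_nonneg (3 * x - 2)]

theorem sq_mul_one_sub_nonneg {x : ℝ} (hx1 : x ≤ 1) : 0 ≤ x ^ 2 * (1 - x) :=
  mul_nonneg (sq_nonneg x) (by linarith)

noncomputable def logTerm (z : ℝ) (n : ℕ) (x : ℝ) : ℝ :=
  z ^ (n + 1) * (x ^ (2 * n + 1) * (1 - x) ^ n) / (n + 1)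

theorem logTerm_eq (z : ℝ) (n : ℕ) (x : ℝ) :
    logTerm z n x = z ^ (n + 1) / (n + 1) * (x * (x ^ 2 * (1 - x)) ^ n) := by
  rw [logTerm, mul_pow, ← pow_mul]; ring

theorem hasSum_logTerm {z x : ℝ} (hz : |z| < 27 / 4) (hx : x ∈ Ioo (0:ℝ) 1) :
    HasSum (fun n ↦ logTerm z n x) (-log (1 - z * x ^ 2 + z * x ^ 3) / (x * (1 - x))) := by
  obtain ⟨hx0, hx1⟩ := hx
  have ht : |z * (x ^ 2 * (1 - x))| < 1 := by
    rw [abs_mul, abs_of_nonneg (sq_mul_one_sub_nonneg hx1.le)]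
    nlinarith [abs_nonneg z, sq_mul_one_sub_le hx0.le, sq_mul_one_sub_nonneg hx1.le]
  have h := (Real.hasSum_pow_div_log_of_abs_lt_one ht).div_const (x * (1 - x))
  rw [show 1 - z * (x ^ 2 * (1 - x)) = 1 - z * x ^ 2 + z * x ^ 3 by ring] at h
  have : 1 - x ≠ 0 := by linarith
  have hterm : (fun n ↦ logTerm z n x) =
      fun n : ℕ ↦ (z * (x ^ 2 * (1 - x))) ^ (n + 1) / (n + 1) / (x * (1 - x)) := by
    funext n
    rw [logTerm_eq, mul_pow z, pow_succ (x ^ 2 * (1 - x))]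
    field_simp
  rwa [hterm]

theorem norm_logTerm_le (z : ℝ) (n : ℕ) {x : ℝ} (hx : x ∈ Icc (0:ℝ) 1) :
    ‖logTerm z n x‖ ≤ |z| * (|z| * (4 / 27)) ^ n := by
  obtain ⟨hx0, hx1⟩ := hx
  have hcube : 0 ≤ x ^ 2 * (1 - x) := sq_mul_one_sub_nonneg hx1
  rw [logTerm_eq, norm_mul, norm_div, norm_pow, Real.norm_eq_abs,
    Real.norm_of_nonneg (by positivity : (0:ℝ) ≤ n + 1),
    Real.norm_of_nonneg (by positivity : 0 ≤ x * (x ^ 2 * (1 - x)) ^ n)]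
  calc |z| ^ (n + 1) / (n + 1) * (x * (x ^ 2 * (1 - x)) ^ n)
      ≤ |z| ^ (n + 1) / 1 * (1 * (4 / 27) ^ n) := by
        gcongr
        · linarith [(n.cast_nonneg : (0:ℝ) ≤ n)]
        · exact sq_mul_one_sub_le hx0
    _ = |z| * (|z| * (4 / 27)) ^ n := by ring

theorem inv_sq_mul_choose_eq (n : ℕ) :
    1 / ((n + 1) ^ 2 * (3 * (n + 1)).choose (n + 1) : ℝ) =
      2 / 3 * ((2 * n + 1)! * n ! / ((n + 1) * (3 * n + 2)!)) := by
  have hc := Nat.choose_mul_factorial_mul_factorial (show n + 1 ≤ 3 * (n + 1) by omega)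
  rw [show 3 * (n + 1) - (n + 1) = (2 * n + 1) + 1 by omega,
    show (3 * (n + 1))! = (3 * n + 2 + 1)! by ring_nf, Nat.factorial_succ (3 * n + 2),
    Nat.factorial_succ (2 * n + 1), Nat.factorial_succ n] at hc
  have key : 3 * (3 * n + 2)! = (n + 1) * (3 * (n + 1)).choose (n + 1) * 2 * (2 * n + 1)! * n ! :=
    Nat.eq_of_mul_eq_mul_left (Nat.succ_pos n) (by linarith)
  have : ((3 * (n + 1)).choose (n + 1) : ℝ) ≠ 0 :=
    Nat.cast_ne_zero.mpr (Nat.choose_pos (by omega)).ne'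
  field_simp
  exact_mod_cast key

theorem integral_logTerm (z : ℝ) (n : ℕ) :
    ∫ x in (0:ℝ)..1, logTerm z n x =
      z ^ (n + 1) / (n + 1) * ((2 * n + 1)! * n ! / (3 * n + 2)!) := by
  simp only [logTerm, mul_div_right_comm _ _ ((n:ℝ) + 1), intervalIntegral.integral_const_mul,
    integral_pow_mul_one_sub_pow]
  rw [show 2 * n + 1 + n + 1 = 3 * n + 2 by ring]

theorem hasSum_integral_logTerm {z : ℝ} (hz : |z| < 27 / 4) :
    HasSum (fun n ↦ ∫ x in (0:ℝ)..1, logTerm z n x)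
      (∫ x in (0:ℝ)..1, -log (1 - z * x ^ 2 + z * x ^ 3) / (x * (1 - x))) := by
  have hr : |z| * (4 / 27) < 1 := by linarith
  refine intervalIntegral.hasSum_integral_of_dominated_convergence
    (fun n _ ↦ |z| * (|z| * (4 / 27)) ^ n) (fun n ↦ ?_) (fun n ↦ ?_) ?_ intervalIntegrable_const ?_
  · unfold logTerm; fun_prop
  · refine ae_of_all _ fun x hx ↦ norm_logTerm_le z n ?_
    rw [uIoc_of_le zero_le_one] at hx
    exact Ioc_subset_Icc_self hx
  · exact ae_of_all _ fun _ _ ↦ (summable_geometric_of_lt_one (by positivity) hr).mul_left _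
  -- at `x = 1` the series sums to `z` while the integrand is the junk value `0 / 0 = 0`
  · filter_upwards [Measure.ae_ne volume 1] with x hx1 hx
    rw [uIoc_of_le zero_le_one] at hx
    exact hasSum_logTerm hz ⟨hx.1, lt_of_le_of_ne hx.2 hx1⟩

theorem stmt_13 (z : ℝ) (hz : |z| < 27 / 4) :
    ∑' n : ℕ, z ^ (n + 1) / ((n + 1) ^ 2 * (Nat.choose (3 * (n + 1)) (n + 1))) =
      (2 / 3) *
        ∫ x in (0:ℝ)..1, (-Real.log (1 - z * x ^ 2 + z * x ^ 3)) / (x * (1 - x)) := by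
  rw [← (hasSum_integral_logTerm hz).tsum_eq, ← tsum_mul_left]
  congr 1 with n
  rw [integral_logTerm, div_eq_mul_one_div, inv_sq_mul_choose_eq]
  field_simp
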